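/- arXiv:1708.03964 — 2 statements merged into one kernel-verified Lean document; each statement's English description precedes it below -/
import Mathlib

section
/- Let γ₁, γ₂ ∈ (0,1) and h = √(γ₁ + γ₂ − γ₁γ₂). Then the system w² + d² = h² + 1 + (1−γ₂)², w·d = h has a unique solution with w > d > 0, and this solution satisfies (1−γ₂)² = (1−d²)(w²−1). -/
set_option maxHeartbeats 1000000


theorem wd_system_unique_solution (γ₁ γ₂ h : ℝ)
    (hγ₁ : γ₁ ∈ Set.Ioo (0:ℝ) 1) (hγ₂ : γ₂ ∈ Set.Ioo (0:ℝ) 1)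
    (hh : h = Real.sqrt (γ₁ + γ₂ - γ₁ * γ₂)) :
    (∃! p : ℝ × ℝ, p.1 > p.2 ∧ p.2 > 0 ∧
        p.1 ^ 2 + p.2 ^ 2 = h ^ 2 + 1 + (1 - γ₂) ^ 2 ∧ p.1 * p.2 = h) ∧
    (∀ w d : ℝ, w > d → d > 0 →
        w ^ 2 + d ^ 2 = h ^ 2 + 1 + (1 - γ₂) ^ 2 → w * d = h →
        (1 - γ₂) ^ 2 = (1 - d ^ 2) * (w ^ 2 - 1)) := by
  obtain ⟨hγ₁0, hγ₁1⟩ := hγ₁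
  obtain ⟨hγ₂0, hγ₂1⟩ := hγ₂
  have hpos : 0 < γ₁ + γ₂ - γ₁ * γ₂ := by nlinarith
  have hpos' : (0:ℝ) < h := by rw [hh]; exact Real.sqrt_pos.mpr hpos
  have hsq : h ^ 2 = γ₁ + γ₂ - γ₁ * γ₂ := by
    rw [hh, sq]; exact Real.mul_self_sqrt hpos.le
  set S : ℝ := h ^ 2 + 1 + (1 - γ₂) ^ 2 with hS
  have hSm : 0 < S - 2 * h := by
    have : S - 2 * h = (h - 1) ^ 2 + (1 - γ₂) ^ 2 := by ring
    rw [this]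
    have : (0:ℝ) < (1 - γ₂) ^ 2 := pow_pos (by linarith) 2
    nlinarith [sq_nonneg (h - 1)]
  have hSp : 0 < S + 2 * h := by nlinarith
  set u : ℝ := Real.sqrt (S + 2 * h) with hu
  set v : ℝ := Real.sqrt (S - 2 * h) with hv
  have hu2 : u ^ 2 = S + 2 * h := Real.sq_sqrt hSp.le
  have hv2 : v ^ 2 = S - 2 * h := Real.sq_sqrt hSm.le
  have hu0 : 0 < u := Real.sqrt_pos.mpr hSp
  have hv0 : 0 < v := Real.sqrt_pos.mpr hSm
  have huv : v < u := by
    have := Real.sqrt_lt_sqrt hSm.le (by linarith : S - 2 * h < S + 2 * h)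
    simpa [hu, hv] using this
  set w : ℝ := (u + v) / 2 with hwdef
  set d : ℝ := (u - v) / 2 with hddef
  have hwd : d < w := by simp only [hwdef, hddef]; linarith
  have hd0 : 0 < d := by simp only [hddef]; linarith
  have hsum : w ^ 2 + d ^ 2 = S := by
    have : w ^ 2 + d ^ 2 = (u ^ 2 + v ^ 2) / 2 := by simp only [hwdef, hddef]; ring
    rw [this, hu2, hv2]; ring
  have hprod : w * d = h := by
    have : w * d = (u ^ 2 - v ^ 2) / 4 := by simp only [hwdef, hddef]; ring
    rw [this, hu2, hv2]; ring
  constructor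
  · refine ⟨(w, d), ⟨hwd, hd0, hsum, hprod⟩, ?_⟩
    rintro ⟨a, b⟩ ⟨hab, hb0, habS, habP⟩
    simp only at hab hb0 habS habP
    have ha0 : 0 < a := lt_trans hb0 hab
    have hsum2 : (a + b) ^ 2 = (w + d) ^ 2 := by
      have : (a + b) ^ 2 = S + 2 * h := by rw [← habS, ← habP]; ring
      have h2 : (w + d) ^ 2 = S + 2 * h := by rw [← hsum, ← hprod]; ring
      rw [this, h2]
    have hdiff2 : (a - b) ^ 2 = (w - d) ^ 2 := by
      have : (a - b) ^ 2 = S - 2 * h := by rw [← habS, ← habP]; ring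
      have h2 : (w - d) ^ 2 = S - 2 * h := by rw [← hsum, ← hprod]; ring
      rw [this, h2]
    have hsum3 : a + b = w + d := by
      have hz : (a + b - (w + d)) * (a + b + (w + d)) = 0 := by linear_combination hsum2
      rcases mul_eq_zero.mp hz with hz | hz
      · linarith
      · nlinarith
    have hdiff3 : a - b = w - d := by
      have hz : (a - b - (w - d)) * (a - b + (w - d)) = 0 := by linear_combination hdiff2
      rcases mul_eq_zero.mp hz with hz | hz
      · linarith
      · nlinarith
    have haw : a = w := by linarith
    have hbd : b = d := by linarith
    simp [Prod.ext_iff, haw, hbd]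
  · intro w' d' hwd' hd0' hsum' hprod'
    linear_combination -hsum' + (w' * d' + h) * hprod'
end

section
/- Let the resolvent-type rational function f(z) = (1+hz)(h+z)/(z(w+dz)(d+wz)(γ₂z+h)(γ₂+hz)) with w > d > 0, h = wd, γ₂ ∈ (0,1). Evaluating the residue-type expression s_BNP = −(h²(1−γ₂)/2)·[R₀ + R₁ + R₂], where R₀, R₁, R₂ are the residues of (1−z²)²/(z(w+dz)(d+wz)(γ₂z+h)(γ₂+hz)) at z = 0, z = −d/w, z = −γ₂/h respectively, yields s_BNP = (1−γ₂)/(w²−γ₂). -/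
theorem sBNP_residue_value (w d h γ₂ R₀ R₁ R₂ : ℝ)
    (hwd : w > d) (hd : d > 0) (hh : h = w * d)
    (hγ₂ : γ₂ ∈ Set.Ioo (0:ℝ) 1)
    (hrel : (1 - γ₂) ^ 2 = (1 - d ^ 2) * (w ^ 2 - 1))
    (hpole1 : γ₂ < d ^ 2) (hpole2 : d ^ 2 < 1) (hpole3 : 1 < w ^ 2)
    (hR₀ : R₀ = (1 - (0:ℝ) ^ 2) ^ 2 /
        ((w + d * 0) * (d + w * 0) * (γ₂ * 0 + h) * (γ₂ + h * 0)))
    (hR₁ : R₁ = (1 - (-(d / w)) ^ 2) ^ 2 /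
        ((-(d / w)) * w * (w + d * (-(d / w))) * (γ₂ * (-(d / w)) + h)
          * (γ₂ + h * (-(d / w)))))
    (hR₂ : R₂ = (1 - (-(γ₂ / h)) ^ 2) ^ 2 /
        (h * (-(γ₂ / h)) * (w + d * (-(γ₂ / h))) * (d + w * (-(γ₂ / h)))
          * (γ₂ * (-(γ₂ / h)) + h))) :
    -(h ^ 2 * (1 - γ₂) / 2) * (R₀ + R₁ + R₂) = (1 - γ₂) / (w ^ 2 - γ₂) := by
  obtain ⟨hγ0, hγ1⟩ := hγ₂
  have hw : (0:ℝ) < w := lt_trans hd hwd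
  have hw0 : w ≠ 0 := ne_of_gt hw
  have hd0 : d ≠ 0 := ne_of_gt hd
  have hγ0' : γ₂ ≠ 0 := ne_of_gt hγ0
  have h1 : w ^ 2 - γ₂ ≠ 0 := by nlinarith
  have h2 : d ^ 2 - γ₂ ≠ 0 := by nlinarith
  have h3 : γ₂ - d ^ 2 ≠ 0 := by nlinarith
  have h4 : w ^ 2 - d ^ 2 ≠ 0 := by nlinarith
  subst hh hR₀ hR₁ hR₂
  have hγd : γ₂ + w * d * -(d / w) ≠ 0 := by
    have e : γ₂ + w * d * -(d / w) = γ₂ - d ^ 2 := by field_simp; ring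
    rw [e]; exact h3
  have hA : -(d / w) * w * (w + d * -(d / w)) * (γ₂ * -(d / w) + w * d) * (γ₂ + w * d * -(d / w))
      = (d ^ 2 * (w ^ 2 - d ^ 2) * (w ^ 2 - γ₂) * (d ^ 2 - γ₂)) / w ^ 2 := by
    field_simp; ring
  have hB : w * d * -(γ₂ / (w * d)) * (w + d * -(γ₂ / (w * d))) * (d + w * -(γ₂ / (w * d))) *
      (γ₂ * -(γ₂ / (w * d)) + w * d)
      = -(γ₂ * (w ^ 2 - γ₂) * (d ^ 2 - γ₂) * (w ^ 2 * d ^ 2 - γ₂ ^ 2)) / (w ^ 2 * d ^ 2) := by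
    field_simp; ring
  have hC : (1 - (-(d / w)) ^ 2) ^ 2 = (w ^ 2 - d ^ 2) ^ 2 / w ^ 4 := by
    field_simp
  have hD : (1 - (-(γ₂ / (w * d))) ^ 2) ^ 2 = (w ^ 2 * d ^ 2 - γ₂ ^ 2) ^ 2 / (w ^ 2 * d ^ 2) ^ 2 := by
    field_simp
  rw [hA, hB, hC, hD]
  have h6 : w ^ 2 * d ^ 2 - γ₂ ^ 2 ≠ 0 := by nlinarith
  field_simp
  ring
end
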